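/- Let G be a cograph. If G contains an induced P3 and an induced 2K2, then G contains an induced subgraph isomorphic to P3 ∪ K2 or to the butterfly. -/

import Mathlib

open SimpleGraph

/-- The disjoint union `G ∪ H` of two vertex-disjoint graphs. -/
def gUnion {α β : Type*} (G : SimpleGraph α) (H : SimpleGraph β) : SimpleGraph (α ⊕ β) where
  Adj x y :=
    match x, y with
    | Sum.inl a, Sum.inl b => G.Adj a b
    | Sum.inr a, Sum.inr b => H.Adj a b
    | _, _ => False
  symm := by constructor; rintro (a | a) (b | b) h
             · exact G.symm.symm _ _ h
             · exact h.elim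
             · exact h.elim
             · exact H.symm.symm _ _ h
  loopless := by constructor; rintro (a | a) h
                 · exact G.loopless.irrefl a h
                 · exact H.loopless.irrefl a h

/-- The join `G ⊕ H` of two vertex-disjoint graphs: disjoint union plus all edges across. -/
def gJoin {α β : Type*} (G : SimpleGraph α) (H : SimpleGraph β) : SimpleGraph (α ⊕ β) where
  Adj x y :=
    match x, y with
    | Sum.inl a, Sum.inl b => G.Adj a b
    | Sum.inr a, Sum.inr b => H.Adj a b
    | _, _ => True
  symm := by constructor; rintro (a | a) (b | b) h
             · exact G.symm.symm _ _ h
             · trivial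
             · trivial
             · exact H.symm.symm _ _ h
  loopless := by constructor; rintro (a | a) h
                 · exact G.loopless.irrefl a h
                 · exact H.loopless.irrefl a h

/-- The complete graph `Kₙ`. -/
def KG (n : ℕ) : SimpleGraph (Fin n) := ⊤

/-- The edgeless graph `nK₁` on `n` vertices. -/
def EG (n : ℕ) : SimpleGraph (Fin n) := ⊥

/-- `G` contains `H`, i.e. `H` is isomorphic to an induced subgraph of `G`. -/
def Contains {α β : Type*} (G : SimpleGraph α) (H : SimpleGraph β) : Prop :=
  Nonempty (H ↪g G)

/-- A cograph is a `P₄`-free graph. -/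
def IsCograph {α : Type*} (G : SimpleGraph α) : Prop :=
  ¬ Contains G (pathGraph 4)

/-- `G` is partitionable: its vertex set splits into a part inducing a triangle-free
graph and a part inducing a `P₃`-free graph. -/
def Partitionable {α : Type*} (G : SimpleGraph α) : Prop :=
  ∃ A : Set α, (G.induce A).CliqueFree 3 ∧ ¬ Contains (G.induce Aᶜ) (pathGraph 3)

/-- `G` is monopolar: its vertex set splits into an independent set and a part
inducing a `P₃`-free graph. -/
def Monopolar {α : Type*} (G : SimpleGraph α) : Prop :=
  ∃ A : Set α, (G.induce A).CliqueFree 2 ∧ ¬ Contains (G.induce Aᶜ) (pathGraph 3)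

/-- `G` is (1,2)-partitionable: its vertex set can be partitioned into at most one
clique and at most two independent sets (equivalently, covered by them). -/
def OneTwoPartitionable {α : Type*} (G : SimpleGraph α) : Prop :=
  ∃ C S₁ S₂ : Set α, C ∪ S₁ ∪ S₂ = Set.univ ∧ G.IsClique C ∧
    (G.induce S₁).CliqueFree 2 ∧ (G.induce S₂).CliqueFree 2

/-- A threshold graph is a `(2K₂, C₄, P₄)`-free graph. -/
def IsThreshold {α : Type*} (G : SimpleGraph α) : Prop :=
  ¬ Contains G (gUnion (KG 2) (KG 2)) ∧ ¬ Contains G (cycleGraph 4) ∧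
    ¬ Contains G (pathGraph 4)

/-- The diamond `K₂ ⊕ 2K₁`. -/
def diamond := gJoin (KG 2) (EG 2)

/-- The paw `K₁ ⊕ (K₁ ∪ K₂)`. -/
def paw := gJoin (KG 1) (gUnion (KG 1) (KG 2))

/-- The butterfly `K₁ ⊕ 2K₂`. -/
def butterfly := gJoin (KG 1) (gUnion (KG 2) (KG 2))

def twoK2 := gUnion (KG 2) (KG 2)

def twoK3 := gUnion (KG 3) (KG 3)

def K2uK1 := gUnion (KG 2) (KG 1)

/-!
Let `de` and `fg` be the edges of an induced `2K₂`. In a `P₄`-free graph a vertex adjacent to an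
end of each edge is adjacent to all four ends, which is a butterfly; so without a butterfly the
closed neighbourhoods `N[de]` and `N[fg]` are disjoint, and `P₄`-freeness then rules out edges
between them as well. An induced `P₃` `abc` cannot meet both: its ends would lie one in each,
and for a neighbour `s ∈ {d, e}` of `a` the path `s a b c` would be an induced `P₄`. So the `P₃`
avoids `N[de]` or `N[fg]`, and with that edge it induces `P₃ ∪ K₂`.
-/

section

variable {α β γ : Type*} {G : SimpleGraph α}

namespace SimpleGraph

def closedNbhd (G : SimpleGraph α) (S : Set α) : Set α :=
  {v | ∃ s ∈ S, v = s ∨ G.Adj v s}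

def Anticomplete (G : SimpleGraph α) (S T : Set α) : Prop :=
  ∀ ⦃s⦄, s ∈ S → ∀ ⦃t⦄, t ∈ T → s ≠ t ∧ ¬ G.Adj s t

section closedNbhd

variable {S T : Set α} {s v : α}

lemma subset_closedNbhd (S : Set α) : S ⊆ G.closedNbhd S :=
  fun s hs => ⟨s, hs, Or.inl rfl⟩

lemma mem_closedNbhd_of_adj (hs : s ∈ S) (h : G.Adj v s) : v ∈ G.closedNbhd S :=
  ⟨s, hs, Or.inr h⟩

lemma Anticomplete.symm (h : G.Anticomplete S T) : G.Anticomplete T S :=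
  fun _ ht _ hs => ⟨(h hs ht).1.symm, fun hts => (h hs ht).2 hts.symm⟩

lemma Anticomplete.notMem_closedNbhd (h : G.Anticomplete S T) (hs : s ∈ S) :
    s ∉ G.closedNbhd T := by
  rintro ⟨t, ht, rfl | hst⟩
  exacts [(h hs ht).1 rfl, (h hs ht).2 hst]

lemma not_anticomplete_iff : ¬ G.Anticomplete S T ↔ ∃ s ∈ S, s ∈ G.closedNbhd T := by
  simp only [Anticomplete, closedNbhd, Set.mem_ofPred_eq, not_forall, not_and_or, not_not,
    exists_prop, ne_eq]

end closedNbhd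

end SimpleGraph

-- No distinctness hypotheses: in the degenerate cases `w = y` or `x = z` the conclusion holds.
lemma IsCograph.adj_of_adj_of_adj_of_adj {w x y z : α} (hG : IsCograph G)
    (hwx : G.Adj w x) (hxy : G.Adj x y) (hyz : G.Adj y z)
    (hwy : ¬ G.Adj w y) (hxz : ¬ G.Adj x z) : G.Adj w z := by
  by_contra hwz
  have hwy' : w ≠ y := by rintro rfl; exact hwz hyz
  have hxz' : x ≠ z := by rintro rfl; exact hwz hwx
  have hwz' : w ≠ z := by rintro rfl; exact hwy hyz.symm
  refine hG ⟨⟨⟨![w, x, y, z], ?_⟩, ?_⟩⟩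
  · intro i j hij
    fin_cases i <;> fin_cases j <;>
      simp_all [hwx.ne, hxy.ne, hyz.ne, hwx.ne.symm, hxy.ne.symm, hyz.ne.symm, eq_comm]
  · intro i j
    show G.Adj (![w, x, y, z] i) (![w, x, y, z] j) ↔ _
    fin_cases i <;> fin_cases j <;>
      simp [pathGraph_adj, hwx, hxy, hyz, hwx.symm, hxy.symm, hyz.symm, hwy, hxz, hwz,
        mt G.adj_symm hwy, mt G.adj_symm hxz, mt G.adj_symm hwz]

def gUnion.inlEmbedding (H : SimpleGraph β) (K : SimpleGraph γ) : H ↪g gUnion H K :=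
  ⟨⟨Sum.inl, Sum.inl_injective⟩, Iff.rfl⟩

def gUnion.inrEmbedding (H : SimpleGraph β) (K : SimpleGraph γ) : K ↪g gUnion H K :=
  ⟨⟨Sum.inr, Sum.inr_injective⟩, Iff.rfl⟩

section embeddings

variable {H : SimpleGraph β} {K : SimpleGraph γ}

lemma anticomplete_range_inlEmbedding_inrEmbedding (q : gUnion H K ↪g G) :
    G.Anticomplete (Set.range (q.comp (gUnion.inlEmbedding H K)))
      (Set.range (q.comp (gUnion.inrEmbedding H K))) := by
  rintro _ ⟨i, rfl⟩ _ ⟨j, rfl⟩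
  exact ⟨fun h => Sum.inl_ne_inr (q.injective h), fun h => q.map_adj_iff.1 h⟩

lemma contains_gUnion_of_anticomplete (p : H ↪g G) (q : K ↪g G)
    (h : G.Anticomplete (Set.range p) (Set.range q)) : Contains G (gUnion H K) := by
  have hpq : ∀ i j, p i ≠ q j ∧ ¬ G.Adj (p i) (q j) := fun i j => h ⟨i, rfl⟩ ⟨j, rfl⟩
  refine ⟨⟨⟨Sum.elim p q, ?_⟩, ?_⟩⟩
  · rintro (i | i) (j | j) hij
    exacts [congrArg _ (p.injective hij), ((hpq i j).1 hij).elim,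
      ((hpq j i).1 hij.symm).elim, congrArg _ (q.injective hij)]
  · rintro (i | i) (j | j)
    exacts [p.map_adj_iff, iff_false_intro (hpq i j).2,
      iff_false_intro (mt G.adj_symm (hpq j i).2), q.map_adj_iff]

lemma contains_gJoin_of_forall_adj (p : H ↪g G) (q : K ↪g G) (h : ∀ i j, G.Adj (p i) (q j)) :
    Contains G (gJoin H K) := by
  refine ⟨⟨⟨Sum.elim p q, ?_⟩, ?_⟩⟩
  · rintro (i | i) (j | j) hij
    exacts [congrArg _ (p.injective hij), ((h i j).ne hij).elim,
      ((h j i).ne hij.symm).elim, congrArg _ (q.injective hij)]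
  · rintro (i | i) (j | j)
    exacts [p.map_adj_iff, iff_true_intro (h i j), iff_true_intro (h j i).symm, q.map_adj_iff]

end embeddings

section cograph

variable {S T : Set α} {s t v : α}

lemma IsCograph.forall_adj_of_adj_of_adj (hG : IsCograph G) (hS : G.IsClique S)
    (hST : G.Anticomplete S T) (hs : s ∈ S) (ht : t ∈ T) (hvs : G.Adj v s) (hvt : G.Adj v t) :
    ∀ s' ∈ S, G.Adj v s' := by
  intro s' hs'
  by_contra hvs'
  obtain rfl | hne := eq_or_ne s' s
  · exact hvs' hvs
  exact (hST hs' ht).2 <|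
    hG.adj_of_adj_of_adj_of_adj (hS hs' hs hne) hvs.symm hvt (mt G.adj_symm hvs') (hST hs ht).2

lemma IsCograph.forall_adj_of_mem_closedNbhd (hG : IsCograph G) (hS : G.IsClique S)
    (hST : G.Anticomplete S T) (hvS : v ∈ G.closedNbhd S) (hvT : v ∈ G.closedNbhd T) :
    ∀ s ∈ S, G.Adj v s := by
  obtain ⟨s, hs, rfl | hvs⟩ := hvS
  · exact (hST.notMem_closedNbhd hs hvT).elim
  obtain ⟨t, ht, rfl | hvt⟩ := hvT
  · exact ((hST hs ht).2 hvs.symm).elim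
  exact hG.forall_adj_of_adj_of_adj hS hST hs ht hvs hvt

lemma IsCograph.anticomplete_closedNbhd (hG : IsCograph G)
    (h : Disjoint (G.closedNbhd S) (G.closedNbhd T)) :
    G.Anticomplete (G.closedNbhd S) (G.closedNbhd T) := by
  intro u hu w hw
  refine ⟨fun huw => Set.disjoint_left.1 h hu (huw ▸ hw), fun huw => ?_⟩
  have hwS : w ∉ G.closedNbhd S := Set.disjoint_right.1 h hw
  have huT : u ∉ G.closedNbhd T := Set.disjoint_left.1 h hu
  obtain ⟨s, hs, rfl | hus⟩ := hu
  · exact hwS (mem_closedNbhd_of_adj hs huw.symm)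
  obtain ⟨t, ht, rfl | hwt⟩ := hw
  · exact huT (mem_closedNbhd_of_adj ht huw)
  have hst : G.Adj s t := hG.adj_of_adj_of_adj_of_adj hus.symm huw hwt
    (fun hsw => hwS (mem_closedNbhd_of_adj hs hsw.symm))
    (fun hut => huT (mem_closedNbhd_of_adj ht hut))
  exact Set.disjoint_left.1 h (subset_closedNbhd S hs) (mem_closedNbhd_of_adj ht hst)

lemma IsCograph.disjoint_closedNbhd_of_not_contains_butterfly (hG : IsCograph G)
    (hbf : ¬ Contains G butterfly) (q : twoK2 ↪g G) :
    Disjoint (G.closedNbhd (Set.range (q.comp (gUnion.inlEmbedding _ _))))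
      (G.closedNbhd (Set.range (q.comp (gUnion.inrEmbedding _ _)))) := by
  have hST := anticomplete_range_inlEmbedding_inrEmbedding q
  refine Set.disjoint_left.2 fun v hvS hvT => hbf ?_
  have hvS' := hG.forall_adj_of_mem_closedNbhd (isClique_range_copy_top (q.comp _).toCopy)
    hST hvS hvT
  have hvT' := hG.forall_adj_of_mem_closedNbhd (isClique_range_copy_top (q.comp _).toCopy)
    hST.symm hvT hvS
  refine contains_gJoin_of_forall_adj ⟨⟨fun _ => v, fun a b _ => Subsingleton.elim a b⟩,
    fun {a b} => by simp [KG, Subsingleton.elim a b]⟩ q ?_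
  rintro _ (i | i)
  exacts [hvS' _ ⟨i, rfl⟩, hvT' _ ⟨i, rfl⟩]

lemma pathGraph_three_exists_adj_adj_of_not_adj :
    ∀ i j : Fin 3, i ≠ j → ¬ (pathGraph 3).Adj i j →
      ∃ k, (pathGraph 3).Adj i k ∧ (pathGraph 3).Adj k j := by
  simp only [pathGraph_adj]
  decide

lemma IsCograph.anticomplete_range_or (hG : IsCograph G) (p : pathGraph 3 ↪g G)
    (hST : G.Anticomplete (G.closedNbhd S) (G.closedNbhd T)) :
    G.Anticomplete (Set.range p) S ∨ G.Anticomplete (Set.range p) T := by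
  by_contra! ⟨hS, hT⟩
  obtain ⟨_, ⟨i, rfl⟩, hiS⟩ := not_anticomplete_iff.1 hS
  obtain ⟨_, ⟨j, rfl⟩, hjT⟩ := not_anticomplete_iff.1 hT
  obtain ⟨hij, hij'⟩ := hST hiS hjT
  obtain ⟨k, hik, hkj⟩ := pathGraph_three_exists_adj_adj_of_not_adj i j
    (fun h => hij (congrArg p h)) (mt p.map_adj_iff.2 hij')
  rw [← p.map_adj_iff] at hik hkj
  have hkS : p k ∉ G.closedNbhd S := fun hkS => (hST hkS hjT).2 hkj
  obtain ⟨s, hs, rfl | his⟩ := hiS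
  · exact hkS (mem_closedNbhd_of_adj hs hik.symm)
  exact (hST (subset_closedNbhd S hs) hjT).2 <| hG.adj_of_adj_of_adj_of_adj his.symm hik hkj
    (fun hsk => hkS (mem_closedNbhd_of_adj hs hsk.symm)) hij'

end cograph

end

theorem stmt_1_general {α : Type*} (G : SimpleGraph α) (hcog : IsCograph G)
    (hP3 : Contains G (pathGraph 3)) (h2K2 : Contains G twoK2) :
    Contains G (gUnion (pathGraph 3) (KG 2)) ∨ Contains G butterfly := by
  by_cases hbf : Contains G butterfly
  · exact Or.inr hbf
  obtain ⟨p⟩ := hP3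
  obtain ⟨q⟩ := h2K2
  have hST := hcog.anticomplete_closedNbhd
    (hcog.disjoint_closedNbhd_of_not_contains_butterfly hbf q)
  rcases hcog.anticomplete_range_or p hST with h | h <;>
    exact Or.inl (contains_gUnion_of_anticomplete p _ h)

theorem stmt_1 {α : Type*} [Fintype α] (G : SimpleGraph α) (hcog : IsCograph G)
    (hP3 : Contains G (pathGraph 3)) (h2K2 : Contains G twoK2) :
    Contains G (gUnion (pathGraph 3) (KG 2)) ∨ Contains G butterfly :=
  stmt_1_general G hcog hP3 h2K2
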